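/- Feasibility of the LMI implies spectral placement: if there exist P_Φ, P_e ≻ 0 symmetric, G, and λ > 0 such that the 3N×3N block matrix [[P_ΦA + AᵀP_Φ + 2αP_Φ + λc_r²I, 0, P_Φ],[0, P_eA − GC + AᵀP_e − CᵀGᵀ + 2αP_e, P_e],[P_Φ, P_e, −λI]] is negative definite, then with L = P_e^{−1}G, all eigenvalues of A − LC have real part less than −α, and additionally all eigenvalues of A have real part less than −α. -/

import Mathlib

open Matrix

/-- `μ : ℂ` is an eigenvalue of the real matrix `M`. -/
def Matrix.HasComplexEigenvalue {N : ℕ} (M : Matrix (Fin N) (Fin N) ℝ) (μ : ℂ) : Prop :=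
  ∃ v : Fin N → ℂ, v ≠ 0 ∧ (M.map (Complex.ofReal)) *ᵥ v = μ • v

/-!
If `P ≻ 0` and `P M + Mᵀ P + 2α P ≺ 0`, then for an eigenpair `M v = μ v` the quadratic form of
the second matrix at `v` equals `2 (Re μ + α) · v* P v`, which forces `Re μ < -α`.
The two diagonal blocks of the LMI are such Lyapunov inequalities: the first one for `A` with
`P = P_Φ` (after dropping the nonnegative term `λ c_r² I`), the second one for `A - L C` with
`P = P_e`, because `P_e (A - P_e⁻¹ G C) = P_e A - G C`.
-/

namespace Matrix

variable {n m : Type*}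

section Blocks

variable {R : Type*} [Ring R] [PartialOrder R] [StarRing R]

theorem PosDef.toBlocks₁₁ {M : Matrix (n ⊕ m) (n ⊕ m) R} (h : M.PosDef) : M.toBlocks₁₁.PosDef :=
  h.submatrix Sum.inl_injective

theorem PosDef.toBlocks₂₂ {M : Matrix (n ⊕ m) (n ⊕ m) R} (h : M.PosDef) : M.toBlocks₂₂.PosDef :=
  h.submatrix Sum.inr_injective

end Blocks

variable [Fintype n]

theorem re_star_dotProduct_map_ofReal_mulVec (Q : Matrix n n ℝ) (v : n → ℂ) :
    (star v ⬝ᵥ Q.map Complex.ofReal *ᵥ v).re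
      = (fun i => (v i).re) ⬝ᵥ Q *ᵥ (fun i => (v i).re)
      + (fun i => (v i).im) ⬝ᵥ Q *ᵥ (fun i => (v i).im) := by
  simp only [dotProduct, mulVec, Pi.star_apply, Matrix.map_apply, Finset.mul_sum,
    ← Finset.sum_add_distrib, Complex.re_sum]
  refine Finset.sum_congr rfl fun i _ => Finset.sum_congr rfl fun j _ => ?_
  simp [Complex.mul_re, Complex.mul_im]

theorem PosDef.re_star_dotProduct_map_ofReal_mulVec_pos {Q : Matrix n n ℝ} (hQ : Q.PosDef)
    {v : n → ℂ} (hv : v ≠ 0) : 0 < (star v ⬝ᵥ Q.map Complex.ofReal *ᵥ v).re := by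
  rw [re_star_dotProduct_map_ofReal_mulVec]
  have hre := hQ.posSemidef.dotProduct_mulVec_nonneg (fun i => (v i).re)
  have him := hQ.posSemidef.dotProduct_mulVec_nonneg (fun i => (v i).im)
  simp only [star_trivial] at hre him
  by_cases h : (fun i => (v i).re) = 0
  · have h' : (fun i => (v i).im) ≠ 0 := fun h' =>
      hv <| funext fun i => Complex.ext (congrFun h i) (congrFun h' i)
    exact add_pos_of_nonneg_of_pos hre (by simpa using hQ.dotProduct_mulVec_pos h')
  · exact add_pos_of_pos_of_nonneg (by simpa using hQ.dotProduct_mulVec_pos h) him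

theorem HasComplexEigenvalue.re_lt_of_lyapunov {N : ℕ} {P M : Matrix (Fin N) (Fin N) ℝ} {α : ℝ}
    (hP : P.PosDef) (hQ : (-(P * M + Mᵀ * P + (2 * α) • P)).PosDef) {μ : ℂ}
    (hμ : M.HasComplexEigenvalue μ) : μ.re < -α := by
  obtain ⟨v, hv, hMv⟩ := hμ
  set Pc := P.map Complex.ofReal
  set Mc := M.map Complex.ofReal
  set a := star v ⬝ᵥ Pc *ᵥ v
  have hMcT : Mcᵀ = Mcᴴ := by
    ext i j
    simp [Mc]
  have hmap : (P * M + Mᵀ * P + (2 * α) • P).map Complex.ofReal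
      = Pc * Mc + Mcᴴ * Pc + ((2 * α : ℝ) : ℂ) • Pc := by
    rw [← hMcT]
    ext i j
    simp [Pc, Mc, mul_apply]
  have hPM : star v ⬝ᵥ (Pc * Mc) *ᵥ v = μ * a := by
    rw [← mulVec_mulVec, hMv, mulVec_smul, dotProduct_smul, smul_eq_mul]
  have hMP : star v ⬝ᵥ (Mcᴴ * Pc) *ᵥ v = starRingEnd ℂ μ * a := by
    rw [← mulVec_mulVec, dotProduct_mulVec, ← star_mulVec, hMv, star_smul, smul_dotProduct,
      smul_eq_mul, Complex.star_def]
  have hform : star v ⬝ᵥ (P * M + Mᵀ * P + (2 * α) • P).map Complex.ofReal *ᵥ v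
      = (μ + starRingEnd ℂ μ + (2 * α : ℝ)) * a := by
    rw [hmap, add_mulVec, add_mulVec, dotProduct_add, dotProduct_add, hPM, hMP, smul_mulVec,
      dotProduct_smul, smul_eq_mul]
    ring
  have hneg := hQ.re_star_dotProduct_map_ofReal_mulVec_pos hv
  rw [Matrix.map_neg _ Complex.ofReal_neg, neg_mulVec, dotProduct_neg, Complex.neg_re,
    hform] at hneg
  have ha : 0 < a.re := hP.re_star_dotProduct_map_ofReal_mulVec_pos hv
  simp only [Complex.mul_re, Complex.add_re, Complex.add_im, Complex.conj_re, Complex.conj_im,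
    Complex.ofReal_re, Complex.ofReal_im] at hneg
  nlinarith

theorem mul_sub_inv_mul_mul_add_transpose_mul {k R : Type*} [Fintype k] [DecidableEq n]
    [CommRing R] {P : Matrix n n R} (hP : Pᵀ = P) (hdet : IsUnit P.det) (A : Matrix n n R)
    (G : Matrix n k R) (C : Matrix k n R) :
    P * (A - P⁻¹ * G * C) + (A - P⁻¹ * G * C)ᵀ * P = P * A - G * C + Aᵀ * P - Cᵀ * Gᵀ := by
  have h : P * (A - P⁻¹ * G * C) = P * A - G * C := by
    rw [mul_sub, Matrix.mul_assoc P⁻¹, mul_nonsing_inv_cancel_left _ _ hdet]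
  rw [← congrArg (_ * ·) hP, ← transpose_mul, h, transpose_sub, transpose_mul, transpose_mul, hP]
  abel

end Matrix

theorem stmt_18_general {N m : ℕ} (A : Matrix (Fin N) (Fin N) ℝ) (C : Matrix (Fin m) (Fin N) ℝ)
    (G : Matrix (Fin N) (Fin m) ℝ) (PΦ Pe : Matrix (Fin N) (Fin N) ℝ)
    (hPΦ : PΦ.PosDef) (hPe : Pe.PosDef) (α cr lam : ℝ)
    (hlam : 0 < lam)
    (hLMI :
      (-(Matrix.fromBlocks
          (Matrix.fromBlocks
            (PΦ * A + Aᵀ * PΦ + (2 * α) • PΦ + (lam * cr ^ 2) • (1 : Matrix (Fin N) (Fin N) ℝ))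
            0 0
            (Pe * A - G * C + Aᵀ * Pe - Cᵀ * Gᵀ + (2 * α) • Pe))
          (Matrix.fromRows PΦ Pe) (Matrix.fromCols PΦ Pe)
          (-lam • (1 : Matrix (Fin N) (Fin N) ℝ)))).PosDef) :
    letI L := Pe⁻¹ * G
    (∀ μ : ℂ, (A - L * C).HasComplexEigenvalue μ → μ.re < -α) ∧
    (∀ μ : ℂ, A.HasComplexEigenvalue μ → μ.re < -α) := by
  rw [fromBlocks_neg, fromBlocks_neg] at hLMI
  have hdiag := hLMI.toBlocks₁₁
  rw [toBlocks_fromBlocks₁₁] at hdiag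
  have hΦ : (-(PΦ * A + Aᵀ * PΦ + (2 * α) • PΦ)).PosDef := by
    have hshift : PosSemidef ((lam * cr ^ 2) • (1 : Matrix (Fin N) (Fin N) ℝ)) :=
      PosSemidef.one.smul (by positivity)
    have h := hdiag.toBlocks₁₁.add_posSemidef hshift
    rwa [toBlocks_fromBlocks₁₁, neg_add (_ + _ + _), neg_add_cancel_right] at h
  have he := hdiag.toBlocks₂₂
  rw [toBlocks_fromBlocks₂₂, ← mul_sub_inv_mul_mul_add_transpose_mul (P := Pe) hPe.isHermitian
    (isUnit_iff_ne_zero.mpr hPe.det_pos.ne') A G C] at he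
  exact ⟨fun μ hμ => hμ.re_lt_of_lyapunov hPe he, fun μ hμ => hμ.re_lt_of_lyapunov hPΦ hΦ⟩

theorem stmt_18 {N m : ℕ} (A : Matrix (Fin N) (Fin N) ℝ) (C : Matrix (Fin m) (Fin N) ℝ)
    (G : Matrix (Fin N) (Fin m) ℝ) (PΦ Pe : Matrix (Fin N) (Fin N) ℝ)
    (hPΦ : PΦ.PosDef) (hPe : Pe.PosDef) (α cr lam : ℝ) (hα : 0 < α) (hcr : 0 < cr)
    (hlam : 0 < lam)
    (hLMI :
      (-(Matrix.fromBlocks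
          (Matrix.fromBlocks
            (PΦ * A + Aᵀ * PΦ + (2 * α) • PΦ + (lam * cr ^ 2) • (1 : Matrix (Fin N) (Fin N) ℝ))
            0 0
            (Pe * A - G * C + Aᵀ * Pe - Cᵀ * Gᵀ + (2 * α) • Pe))
          (Matrix.fromRows PΦ Pe) (Matrix.fromCols PΦ Pe)
          (-lam • (1 : Matrix (Fin N) (Fin N) ℝ)))).PosDef) :
    letI L := Pe⁻¹ * G
    (∀ μ : ℂ, (A - L * C).HasComplexEigenvalue μ → μ.re < -α) ∧
    (∀ μ : ℂ, A.HasComplexEigenvalue μ → μ.re < -α) :=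
  stmt_18_general A C G PΦ Pe hPΦ hPe α cr lam hlam hLMI
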